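/- For any QCTL formula Φ one can build an equivalent QCTL formula FPC(Φ) such that: (1) FPC(Φ) is built up only from atomic propositions, Boolean operators, propositional quantifiers, and the modalities EX and AG; (2) the size of FPC(Φ) is linear in |Φ|; moreover the temporal height of FPC(Φ) is HT(Φ)+1. -/
import Mathlib


open Classical

/-- Syntax of QCTL: `φ ::= q | ¬φ | φ∨ψ | EX φ | E φ U ψ | A φ U ψ | ∃p.φ`. -/
inductive QCTL (AP : Type) : Type where
  | atom : AP → QCTL AP
  | qneg : QCTL AP → QCTL AP
  | qor  : QCTL AP → QCTL AP → QCTL AP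
  | qEX  : QCTL AP → QCTL AP
  | qEU  : QCTL AP → QCTL AP → QCTL AP
  | qAU  : QCTL AP → QCTL AP → QCTL AP
  | qexi : AP → QCTL AP → QCTL AP

/-- A Kripke structure over atomic propositions `AP` with (finite) state space `V`:
a serial edge relation and a labelling function. -/
structure Kripke (AP V : Type) where
  E : V → V → Prop
  serial : ∀ v, ∃ w, E v w
  label : V → Set AP

variable {AP V : Type}

/-- `K'` agrees with `K` (same edges) except possibly on the labelling of `p`. -/
def Kripke.AgreeExcept (K K' : Kripke AP V) (p : AP) : Prop :=
  K'.E = K.E ∧ ∀ v q, q ≠ p → (q ∈ K'.label v ↔ q ∈ K.label v)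

/-- Structure semantics of QCTL. -/
def QCTL.sat : QCTL AP → Kripke AP V → V → Prop
  | .atom p, K, x => p ∈ K.label x
  | .qneg φ, K, x => ¬ φ.sat K x
  | .qor φ ψ, K, x => φ.sat K x ∨ ψ.sat K x
  | .qEX φ, K, x => ∃ y, K.E x y ∧ φ.sat K y
  | .qEU φ ψ, K, x => ∃ ρ : ℕ → V, ρ 0 = x ∧ (∀ i, K.E (ρ i) (ρ (i + 1))) ∧
      ∃ i, ψ.sat K (ρ i) ∧ ∀ j < i, φ.sat K (ρ j)
  | .qAU φ ψ, K, x => ∀ ρ : ℕ → V, ρ 0 = x → (∀ i, K.E (ρ i) (ρ (i + 1))) →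
      ∃ i, ψ.sat K (ρ i) ∧ ∀ j < i, φ.sat K (ρ j)
  | .qexi p φ, K, x => ∃ K' : Kripke AP V, K.AgreeExcept K' p ∧ φ.sat K' x

namespace QCTL

def qand (φ ψ : QCTL AP) : QCTL AP := qneg (qor (qneg φ) (qneg ψ))
def qimp (φ ψ : QCTL AP) : QCTL AP := qor (qneg φ) ψ
def qiff (φ ψ : QCTL AP) : QCTL AP := qand (qimp φ ψ) (qimp ψ φ)
def qtop [Inhabited AP] : QCTL AP := qor (atom default) (qneg (atom default))
def qbot [Inhabited AP] : QCTL AP := qneg qtop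
def qAX (φ : QCTL AP) : QCTL AP := qneg (qEX (qneg φ))
def qEF [Inhabited AP] (φ : QCTL AP) : QCTL AP := qEU qtop φ
def qAG [Inhabited AP] (φ : QCTL AP) : QCTL AP := qneg (qEF (qneg φ))
def qall (p : AP) (φ : QCTL AP) : QCTL AP := qneg (qexi p (qneg φ))

/-- All atomic propositions occurring in a formula (free or bound). -/
def atoms : QCTL AP → Set AP
  | atom p => {p}
  | qneg φ => φ.atoms
  | qor φ ψ => φ.atoms ∪ ψ.atoms
  | qEX φ => φ.atoms
  | qEU φ ψ => φ.atoms ∪ ψ.atoms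
  | qAU φ ψ => φ.atoms ∪ ψ.atoms
  | qexi p φ => insert p φ.atoms

/-- Size of a formula. -/
def qsize : QCTL AP → ℕ
  | atom _ => 1
  | qneg φ => φ.qsize + 1
  | qor φ ψ => φ.qsize + ψ.qsize + 1
  | qEX φ => φ.qsize + 1
  | qEU φ ψ => φ.qsize + ψ.qsize + 1
  | qAU φ ψ => φ.qsize + ψ.qsize + 1
  | qexi _ φ => φ.qsize + 1

end QCTL

/-- Equivalence of two QCTL formulas: same truth value at every state of every
(finite) Kripke structure. -/
def QEquiv (φ ψ : QCTL AP) : Prop :=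
  ∀ (V : Type) [Fintype V] (K : Kripke AP V) (x : V), φ.sat K x ↔ ψ.sat K x

/-- Temporal height: maximal number of nested temporal modalities. -/
def QCTL.ht {AP : Type} : QCTL AP → ℕ
  | .atom _ => 0
  | .qneg φ => φ.ht
  | .qor φ ψ => max φ.ht ψ.ht
  | .qEX φ => φ.ht + 1
  | .qEU φ ψ => max φ.ht ψ.ht + 1
  | .qAU φ ψ => max φ.ht ψ.ht + 1
  | .qexi _ φ => φ.ht

/-- Formulas built up only from atomic propositions, Boolean operators, propositional
quantifiers and the modalities `EX` and `AG`. -/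
inductive OnlyEXAG {AP : Type} [Inhabited AP] : QCTL AP → Prop where
  | atom (p : AP) : OnlyEXAG (QCTL.atom p)
  | qneg {φ} : OnlyEXAG φ → OnlyEXAG (QCTL.qneg φ)
  | qor {φ ψ} : OnlyEXAG φ → OnlyEXAG ψ → OnlyEXAG (QCTL.qor φ ψ)
  | qEX {φ} : OnlyEXAG φ → OnlyEXAG (QCTL.qEX φ)
  | qAG {φ} : OnlyEXAG φ → OnlyEXAG (QCTL.qAG φ)
  | qexi (p : AP) {φ} : OnlyEXAG φ → OnlyEXAG (QCTL.qexi p φ)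

section FPCAux

open QCTL

/-! ### Basic path machinery -/

/-- An infinite path starting from `y`, obtained from seriality by choice. -/
noncomputable def pathFrom (K : Kripke AP V) (y : V) : ℕ → V
  | 0 => y
  | n + 1 => (K.serial (pathFrom K y n)).choose

@[simp] lemma pathFrom_zero (K : Kripke AP V) (y : V) : pathFrom K y 0 = y := rfl

lemma pathFrom_edge (K : Kripke AP V) (y : V) (n : ℕ) :
    K.E (pathFrom K y n) (pathFrom K y (n + 1)) :=
  (K.serial (pathFrom K y n)).choose_spec

/-- Prepend a state to a path. -/
def prepend (y : V) (ρ : ℕ → V) : ℕ → V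
  | 0 => y
  | n + 1 => ρ n

lemma prepend_edge (K : Kripke AP V) (y : V) (ρ : ℕ → V) (h0 : K.E y (ρ 0))
    (hE : ∀ i, K.E (ρ i) (ρ (i + 1))) : ∀ i, K.E (prepend y ρ i) (prepend y ρ (i + 1))
  | 0 => h0
  | n + 1 => hE n

lemma path_reach (K : Kripke AP V) (ρ : ℕ → V) (x : V) (h0 : ρ 0 = x)
    (hE : ∀ i, K.E (ρ i) (ρ (i + 1))) : ∀ i, Relation.ReflTransGen K.E x (ρ i) := by
  intro i
  induction i with
  | zero => rw [h0]
  | succ n ih => exact ih.tail (hE n)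

lemma reach_exists_path (K : Kripke AP V) {x y : V} (h : Relation.ReflTransGen K.E x y) :
    ∃ ρ : ℕ → V, ρ 0 = x ∧ (∀ i, K.E (ρ i) (ρ (i + 1))) ∧ ∃ i, ρ i = y := by
  induction h using Relation.ReflTransGen.head_induction_on with
  | refl => exact ⟨pathFrom K y, rfl, pathFrom_edge K y, 0, rfl⟩
  | head hab _ ih =>
    obtain ⟨ρ, h0, hE, i, hi⟩ := ih
    exact ⟨prepend _ ρ, rfl, prepend_edge K _ ρ (h0 ▸ hab) hE, i + 1, hi⟩

/-! ### Satisfaction of derived connectives -/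

lemma sat_qtop [Inhabited AP] (K : Kripke AP V) (x : V) : (qtop : QCTL AP).sat K x := by
  by_cases h : (default : AP) ∈ K.label x
  · exact Or.inl h
  · exact Or.inr h

lemma sat_qand (a b : QCTL AP) (K : Kripke AP V) (x : V) :
    (qand a b).sat K x ↔ a.sat K x ∧ b.sat K x := by
  simp [qand, QCTL.sat]

lemma sat_qimp (a b : QCTL AP) (K : Kripke AP V) (x : V) :
    (qimp a b).sat K x ↔ (a.sat K x → b.sat K x) := by
  simp [qimp, QCTL.sat]; tauto

lemma sat_qAX (a : QCTL AP) (K : Kripke AP V) (x : V) :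
    (qAX a).sat K x ↔ ∀ y, K.E x y → a.sat K y := by
  simp [qAX, QCTL.sat]

lemma sat_qall (p : AP) (φ : QCTL AP) (K : Kripke AP V) (x : V) :
    (qall p φ).sat K x ↔ ∀ K' : Kripke AP V, K.AgreeExcept K' p → φ.sat K' x := by
  simp [qall, QCTL.sat]

lemma sat_qAG [Inhabited AP] (χ : QCTL AP) (K : Kripke AP V) (x : V) :
    (qAG χ).sat K x ↔ ∀ y, Relation.ReflTransGen K.E x y → χ.sat K y := by
  show (¬ ∃ ρ : ℕ → V, ρ 0 = x ∧ (∀ i, K.E (ρ i) (ρ (i + 1))) ∧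
      ∃ i, (¬ χ.sat K (ρ i)) ∧ ∀ j < i, (qtop : QCTL AP).sat K (ρ j)) ↔ _
  constructor
  · intro h y hy
    by_contra hc
    obtain ⟨ρ, h0, hE, i, hi⟩ := reach_exists_path K hy
    exact h ⟨ρ, h0, hE, i, by rw [hi]; exact hc, fun j _ => sat_qtop K (ρ j)⟩
  · rintro h ⟨ρ, h0, hE, i, hneg, -⟩
    exact hneg (h _ (path_reach K ρ x h0 hE i))

/-! ### Satisfaction only depends on labels of occurring atoms -/

lemma sat_congr (φ : QCTL AP) : ∀ (K K' : Kripke AP V), K.E = K'.E →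
    (∀ v q, q ∈ φ.atoms → (q ∈ K.label v ↔ q ∈ K'.label v)) →
    ∀ x, (φ.sat K x ↔ φ.sat K' x) := by
  induction φ with
  | atom p => intro K K' _ hl x; exact hl x p rfl
  | qneg φ ih => intro K K' hE hl x; exact not_congr (ih K K' hE hl x)
  | qor φ ψ ihφ ihψ =>
    intro K K' hE hl x
    exact or_congr (ihφ K K' hE (fun v q hq => hl v q (Or.inl hq)) x)
      (ihψ K K' hE (fun v q hq => hl v q (Or.inr hq)) x)
  | qEX φ ih =>
    intro K K' hE hl x
    show (∃ y, K.E x y ∧ _) ↔ (∃ y, K'.E x y ∧ _)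
    rw [hE]
    exact exists_congr fun y => and_congr_right fun _ => ih K K' hE hl y
  | qEU φ ψ ihφ ihψ =>
    intro K K' hE hl x
    show (∃ ρ : ℕ → V, _) ↔ _
    rw [hE]
    refine exists_congr fun ρ => and_congr_right fun _ => and_congr_right fun _ =>
      exists_congr fun i => and_congr ?_ ?_
    · exact ihψ K K' hE (fun v q hq => hl v q (Or.inr hq)) _
    · exact forall_congr' fun j => forall_congr' fun _ =>
        ihφ K K' hE (fun v q hq => hl v q (Or.inl hq)) _
  | qAU φ ψ ihφ ihψ =>
    intro K K' hE hl x
    show (∀ ρ : ℕ → V, _) ↔ _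
    rw [hE]
    refine forall_congr' fun ρ => forall_congr' fun _ => forall_congr' fun _ =>
      exists_congr fun i => and_congr ?_ ?_
    · exact ihψ K K' hE (fun v q hq => hl v q (Or.inr hq)) _
    · exact forall_congr' fun j => forall_congr' fun _ =>
        ihφ K K' hE (fun v q hq => hl v q (Or.inl hq)) _
  | qexi p φ ih =>
    intro K K' hE hl x
    have key : ∀ (K K' : Kripke AP V), K.E = K'.E →
        (∀ v q, q ∈ (qexi p φ).atoms → (q ∈ K.label v ↔ q ∈ K'.label v)) →
        (qexi p φ).sat K x → (qexi p φ).sat K' x := by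
      rintro K K' hE hl ⟨K₂, ⟨hE₂, hl₂⟩, hsat⟩
      refine ⟨⟨K'.E, K'.serial, fun v => {q | if q = p then q ∈ K₂.label v else q ∈ K'.label v}⟩,
        ⟨rfl, fun v q hq => by simp [if_neg hq]⟩, ?_⟩
      rw [← ih K₂ _ (by rw [hE₂, hE]) ?_ x]
      · exact hsat
      · intro v q hq
        by_cases hqp : q = p
        · subst hqp; simp
        · simp only [Set.mem_setOf_eq, if_neg hqp]
          rw [hl₂ v q hqp, ← hl v q (Set.mem_insert_iff.mpr (Or.inr hq))]
    exact ⟨key K K' hE hl, key K' K hE.symm (fun v q hq => (hl v q hq).symm)⟩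

/-! ### Relabelling and fresh atoms -/

/-- Relabel the atom `p` according to the predicate `S`. -/
def Kripke.relabel (K : Kripke AP V) (p : AP) (S : V → Prop) : Kripke AP V :=
  ⟨K.E, K.serial, fun v => {q | if q = p then S v else q ∈ K.label v}⟩

lemma relabel_agree (K : Kripke AP V) (p : AP) (S : V → Prop) :
    K.AgreeExcept (Kripke.relabel K p S) p :=
  ⟨rfl, fun v q hq => by simp [Kripke.relabel, if_neg hq]⟩

@[simp] lemma relabel_mem_iff (K : Kripke AP V) (p : AP) (S : V → Prop) (v : V) :
    p ∈ (Kripke.relabel K p S).label v ↔ S v := by simp [Kripke.relabel]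

lemma atoms_finite (φ : QCTL AP) : φ.atoms.Finite := by
  induction φ with
  | atom p => exact Set.finite_singleton p
  | qneg φ ih => exact ih
  | qor φ ψ ihφ ihψ => exact ihφ.union ihψ
  | qEX φ ih => exact ih
  | qEU φ ψ ihφ ihψ => exact ihφ.union ihψ
  | qAU φ ψ ihφ ihψ => exact ihφ.union ihψ
  | qexi p φ ih => exact ih.insert p

/-- A fresh atom outside a (finite) set. -/
noncomputable def freshAtom [Infinite AP] (s : Set AP) : AP :=
  if h : s.Finite then h.infinite_compl.nonempty.choose else Classical.arbitrary AP

lemma freshAtom_notMem [Infinite AP] {s : Set AP} (h : s.Finite) : freshAtom s ∉ s := by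
  rw [freshAtom, dif_pos h]
  exact h.infinite_compl.nonempty.choose_spec

/-! ### The translation -/

variable (AP) in
/-- The fixed-point gadget `∀z. (AG (body → z)) → z`. -/
def fpGadget [Inhabited AP] (z : AP) (body : QCTL AP) : QCTL AP :=
  qall z (qimp (qAG (qimp body (atom z))) (atom z))

/-- The translation `FPC`. -/
noncomputable def fpcT [Inhabited AP] [Infinite AP] : QCTL AP → QCTL AP
  | .atom p => qand (atom p) (qAG qtop)
  | .qneg φ => qneg (fpcT φ)
  | .qor φ ψ => qor (fpcT φ) (fpcT ψ)
  | .qEX φ => qEX (fpcT φ)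
  | .qEU φ ψ =>
      fpGadget AP (freshAtom ((fpcT φ).atoms ∪ (fpcT ψ).atoms))
        (qor (fpcT ψ) (qand (fpcT φ)
          (qEX (atom (freshAtom ((fpcT φ).atoms ∪ (fpcT ψ).atoms))))))
  | .qAU φ ψ =>
      fpGadget AP (freshAtom ((fpcT φ).atoms ∪ (fpcT ψ).atoms))
        (qor (fpcT ψ) (qand (fpcT φ)
          (qAX (atom (freshAtom ((fpcT φ).atoms ∪ (fpcT ψ).atoms))))))
  | .qexi p φ => qexi p (fpcT φ)

/-! ### Syntactic properties of the translation -/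

lemma onlyEXAG_qtop [Inhabited AP] : OnlyEXAG (qtop : QCTL AP) :=
  .qor (.atom _) (.qneg (.atom _))

lemma onlyEXAG_fpcT [Inhabited AP] [Infinite AP] (Φ : QCTL AP) : OnlyEXAG (fpcT Φ) := by
  induction Φ with
  | atom p => exact .qneg (.qor (.qneg (.atom p)) (.qneg (.qAG onlyEXAG_qtop)))
  | qneg φ ih => exact .qneg ih
  | qor φ ψ ihφ ihψ => exact .qor ihφ ihψ
  | qEX φ ih => exact .qEX ih
  | qEU φ ψ ihφ ihψ =>
    exact .qneg (.qexi _ (.qneg (.qor (.qneg (.qAG (.qor (.qneg (.qor ihψ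
      (.qneg (.qor (.qneg ihφ) (.qneg (.qEX (.atom _))))))) (.atom _)))) (.atom _))))
  | qAU φ ψ ihφ ihψ =>
    exact .qneg (.qexi _ (.qneg (.qor (.qneg (.qAG (.qor (.qneg (.qor ihψ
      (.qneg (.qor (.qneg ihφ) (.qneg (.qneg (.qEX (.qneg (.atom _))))))))) (.atom _))))
      (.atom _))))
  | qexi p φ ih => exact .qexi p ih

lemma ht_fpcT [Inhabited AP] [Infinite AP] (Φ : QCTL AP) : (fpcT Φ).ht = Φ.ht + 1 := by
  induction Φ with
  | atom p => simp [fpcT, qand, qAG, qEF, qtop, QCTL.ht]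
  | qneg φ ih => simpa [fpcT, QCTL.ht] using ih
  | qor φ ψ ihφ ihψ => simp [fpcT, QCTL.ht, ihφ, ihψ]
  | qEX φ ih => simpa [fpcT, QCTL.ht] using ih
  | qEU φ ψ ihφ ihψ =>
    simp [fpcT, fpGadget, qall, qimp, qAG, qEF, qtop, qand, QCTL.ht, ihφ, ihψ]; omega
  | qAU φ ψ ihφ ihψ =>
    simp [fpcT, fpGadget, qall, qimp, qAG, qEF, qtop, qand, qAX, QCTL.ht, ihφ, ihψ]; omega
  | qexi p φ ih => simpa [fpcT, QCTL.ht] using ih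

lemma qsize_fpcT [Inhabited AP] [Infinite AP] (Φ : QCTL AP) : (fpcT Φ).qsize ≤ 25 * Φ.qsize := by
  induction Φ with
  | atom p => simp [fpcT, qand, qAG, qEF, qtop, QCTL.qsize]
  | qneg φ ih => simp [fpcT, QCTL.qsize] at *; omega
  | qor φ ψ ihφ ihψ => simp [fpcT, QCTL.qsize] at *; omega
  | qEX φ ih => simp [fpcT, QCTL.qsize] at *; omega
  | qEU φ ψ ihφ ihψ =>
    simp [fpcT, fpGadget, qall, qimp, qAG, qEF, qtop, qand, QCTL.qsize] at *; omega
  | qAU φ ψ ihφ ihψ =>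
    simp [fpcT, fpGadget, qall, qimp, qAG, qEF, qtop, qand, qAX, QCTL.qsize] at *; omega
  | qexi p φ ih => simp [fpcT, QCTL.qsize] at *; omega

/-! ### Semantic correctness -/

lemma sat_fpGadget [Inhabited AP] (z : AP) (body : QCTL AP) (K : Kripke AP V) (x : V) :
    (fpGadget AP z body).sat K x ↔
      ∀ K' : Kripke AP V, K.AgreeExcept K' z →
        (∀ y, Relation.ReflTransGen K'.E x y → body.sat K' y → z ∈ K'.label y) →
        z ∈ K'.label x := by
  rw [fpGadget, sat_qall]
  refine forall_congr' fun K' => imp_congr_right fun _ => ?_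
  rw [sat_qimp, sat_qAG]
  exact imp_congr (forall_congr' fun y => imp_congr_right fun _ => sat_qimp ..) Iff.rfl

lemma sat_agree_fresh {z : AP} (a : QCTL AP) (hz : z ∉ a.atoms) (K K' : Kripke AP V)
    (h : K.AgreeExcept K' z) (y : V) : a.sat K' y ↔ a.sat K y :=
  (sat_congr a K K' h.1.symm (fun v q hq => (h.2 v q (fun e => hz (e ▸ hq))).symm) y).symm

theorem fpcT_sat [Inhabited AP] [Infinite AP] (Φ : QCTL AP) :
    ∀ (K : Kripke AP V) (x : V), Φ.sat K x ↔ (fpcT Φ).sat K x := by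
  induction Φ with
  | atom p =>
    intro K x
    show _ ↔ (qand (atom p) (qAG qtop)).sat K x
    rw [sat_qand, sat_qAG]
    exact ⟨fun h => ⟨h, fun y _ => sat_qtop K y⟩, fun h => h.1⟩
  | qneg φ ih =>
    intro K x
    show (¬ _) ↔ ¬ _
    exact not_congr (ih K x)
  | qor φ ψ ihφ ihψ =>
    intro K x
    exact or_congr (ihφ K x) (ihψ K x)
  | qEX φ ih =>
    intro K x
    exact exists_congr fun y => and_congr_right fun _ => ih K y
  | qexi p φ ih =>
    intro K x
    exact exists_congr fun K' => and_congr_right fun _ => ih K' x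
  | qEU φ ψ ihφ ihψ =>
    intro K x
    set a := fpcT φ with ha
    set b := fpcT ψ with hb
    set z := freshAtom (a.atoms ∪ b.atoms) with hzdef
    have hzfin : (a.atoms ∪ b.atoms).Finite := (atoms_finite a).union (atoms_finite b)
    have hza : z ∉ a.atoms := fun h => freshAtom_notMem hzfin (Or.inl h)
    have hzb : z ∉ b.atoms := fun h => freshAtom_notMem hzfin (Or.inr h)
    show _ ↔ (fpGadget AP z (qor b (qand a (qEX (atom z))))).sat K x
    rw [sat_fpGadget]
    have hbody : ∀ (K' : Kripke AP V), K.AgreeExcept K' z → ∀ y,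
        ((qor b (qand a (qEX (atom z)))).sat K' y ↔
          (ψ.sat K y ∨ (φ.sat K y ∧ ∃ w, K.E y w ∧ z ∈ K'.label w))) := by
      intro K' hK' y
      show (b.sat K' y ∨ (qand a (qEX (atom z))).sat K' y) ↔ _
      rw [sat_qand, sat_agree_fresh a hza K K' hK', sat_agree_fresh b hzb K K' hK',
        ← ihφ K y, ← ihψ K y]
      show _ ∨ (_ ∧ ∃ w, K'.E y w ∧ z ∈ K'.label w) ↔ _
      rw [hK'.1]
    constructor
    · rintro ⟨ρ, h0, hE, i, hψi, hφ⟩ K' hK' hAG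
      have hreach : ∀ j, Relation.ReflTransGen K'.E x (ρ j) := by
        rw [hK'.1]; exact path_reach K ρ x h0 hE
      have key : ∀ k, k ≤ i → z ∈ K'.label (ρ (i - k)) := by
        intro k
        induction k with
        | zero =>
          intro _
          exact hAG (ρ i) (hreach i) ((hbody K' hK' (ρ i)).mpr (Or.inl hψi))
        | succ k ihk =>
          intro hk
          have hj : i - (k + 1) + 1 = i - k := by omega
          refine hAG (ρ (i - (k + 1))) (hreach _) ((hbody K' hK' _).mpr (Or.inr
            ⟨hφ _ (by omega), ρ (i - (k + 1) + 1), hE _, ?_⟩))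
          rw [hj]; exact ihk (by omega)
      have := key i le_rfl
      rwa [Nat.sub_self, h0] at this
    · intro hT
      set S : V → Prop := fun v => (QCTL.qEU φ ψ).sat K v with hS
      have := hT (Kripke.relabel K z S) (relabel_agree K z S) ?_
      · rwa [relabel_mem_iff] at this
      · intro y _ hbs
        rw [hbody _ (relabel_agree K z S) y] at hbs
        rw [relabel_mem_iff]
        rcases hbs with hψy | ⟨hφy, w, hEyw, hzw⟩
        · exact ⟨pathFrom K y, rfl, pathFrom_edge K y, 0, hψy, fun j hj => absurd hj (by omega)⟩
        · rw [relabel_mem_iff] at hzw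
          obtain ⟨ρ, h0, hE, i, hψi, hφρ⟩ := hzw
          refine ⟨prepend y ρ, rfl, prepend_edge K y ρ (h0 ▸ hEyw) hE, i + 1, hψi, ?_⟩
          intro j hj
          match j with
          | 0 => exact hφy
          | k + 1 => exact hφρ k (by omega)
  | qAU φ ψ ihφ ihψ =>
    intro K x
    set a := fpcT φ with ha
    set b := fpcT ψ with hb
    set z := freshAtom (a.atoms ∪ b.atoms) with hzdef
    have hzfin : (a.atoms ∪ b.atoms).Finite := (atoms_finite a).union (atoms_finite b)
    have hza : z ∉ a.atoms := fun h => freshAtom_notMem hzfin (Or.inl h)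
    have hzb : z ∉ b.atoms := fun h => freshAtom_notMem hzfin (Or.inr h)
    show _ ↔ (fpGadget AP z (qor b (qand a (qAX (atom z))))).sat K x
    rw [sat_fpGadget]
    have hbody : ∀ (K' : Kripke AP V), K.AgreeExcept K' z → ∀ y,
        ((qor b (qand a (qAX (atom z)))).sat K' y ↔
          (ψ.sat K y ∨ (φ.sat K y ∧ ∀ w, K.E y w → z ∈ K'.label w))) := by
      intro K' hK' y
      show (b.sat K' y ∨ (qand a (qAX (atom z))).sat K' y) ↔ _
      rw [sat_qand, sat_qAX, sat_agree_fresh a hza K K' hK', sat_agree_fresh b hzb K K' hK',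
        ← ihφ K y, ← ihψ K y, hK'.1]
      exact Iff.rfl
    constructor
    · intro h K' hK' hAG
      by_contra hzx
      set P : V → Prop := fun v => z ∉ K'.label v ∧ (QCTL.qAU φ ψ).sat K v ∧
        Relation.ReflTransGen K.E x v with hP
      have step : ∀ v, P v → ∃ w, K.E v w ∧ P w := by
        rintro v ⟨hzv, hAUv, hreachv⟩
        have hbodyv := hAG v (by rw [hK'.1]; exact hreachv)
        rw [hbody K' hK' v] at hbodyv
        have hnψ : ¬ ψ.sat K v := fun hψv => hzv (hbodyv (Or.inl hψv))
        have hcase : φ.sat K v ∧ ∃ w, K.E v w ∧ z ∉ K'.label w := by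
          by_cases hφv : φ.sat K v
          · refine ⟨hφv, ?_⟩
            by_contra hno
            push_neg at hno
            exact hzv (hbodyv (Or.inr ⟨hφv, hno⟩))
          · exfalso
            obtain ⟨i, hψi, hφρ⟩ := hAUv (pathFrom K v) rfl (pathFrom_edge K v)
            match i, hψi, hφρ with
            | 0, hψi, _ => exact hnψ hψi
            | k + 1, _, hφρ => exact hφv (hφρ 0 (by omega))
        obtain ⟨hφv, w, hEvw, hzw⟩ := hcase
        refine ⟨w, hEvw, hzw, ?_, hreachv.tail hEvw⟩
        intro σ hσ0 hσE
        obtain ⟨i, hψi, hφρ⟩ := hAUv (prepend v σ) rfl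
          (prepend_edge K v σ (hσ0 ▸ hEvw) hσE)
        match i, hψi, hφρ with
        | 0, hψi, _ => exact absurd hψi hnψ
        | k + 1, hψi, hφρ => exact ⟨k, hψi, fun j hj => hφρ (j + 1) (by omega)⟩
      have hPx : P x := ⟨hzx, h, Relation.ReflTransGen.refl⟩
      let g : ℕ → {v : V // P v} := fun n => Nat.rec ⟨x, hPx⟩
        (fun _ p => ⟨(step p.1 p.2).choose, (step p.1 p.2).choose_spec.2⟩) n
      have hgE : ∀ n, K.E (g n).1 (g (n + 1)).1 := fun n => (step (g n).1 (g n).2).choose_spec.1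
      obtain ⟨i, hψi, -⟩ := h (fun n => (g n).1) rfl hgE
      exact (g i).2.1 (hAG (g i).1 (by rw [hK'.1]; exact (g i).2.2.2)
        ((hbody K' hK' _).mpr (Or.inl hψi)))
    · intro hT
      set S : V → Prop := fun v => (QCTL.qAU φ ψ).sat K v with hS
      have := hT (Kripke.relabel K z S) (relabel_agree K z S) ?_
      · rwa [relabel_mem_iff] at this
      · intro y _ hbs
        rw [hbody _ (relabel_agree K z S) y] at hbs
        rw [relabel_mem_iff]
        rcases hbs with hψy | ⟨hφy, hall⟩
        · exact fun ρ h0 hE => ⟨0, h0 ▸ hψy, fun j hj => absurd hj (by omega)⟩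
        · intro ρ h0 hE
          have hw : S (ρ 1) := by
            have := hall (ρ 1) (h0 ▸ hE 0)
            rwa [relabel_mem_iff] at this
          obtain ⟨i, hψi, hφρ⟩ := hw (fun n => ρ (n + 1)) rfl (fun n => hE (n + 1))
          refine ⟨i + 1, hψi, ?_⟩
          intro j hj
          match j with
          | 0 => exact h0 ▸ hφy
          | k + 1 => exact hφρ k (by omega)

end FPCAux

/-- For any QCTL formula `Φ` one can build an equivalent formula `FPC(Φ)` using only
atoms, Boolean operators, propositional quantifiers and the modalities `EX` and `AG`,
of size linear in `|Φ|`, and of temporal height `HT(Φ)+1`. -/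
theorem fpc_exists {AP : Type} [Inhabited AP] [Infinite AP] :
    ∃ FPC : QCTL AP → QCTL AP, ∃ C : ℕ,
      ∀ Φ : QCTL AP,
        QEquiv Φ (FPC Φ) ∧ OnlyEXAG (FPC Φ) ∧
        (FPC Φ).qsize ≤ C * Φ.qsize ∧ (FPC Φ).ht = Φ.ht + 1 := by
  refine ⟨fpcT, 25, fun Φ => ⟨?_, onlyEXAG_fpcT Φ, qsize_fpcT Φ, ht_fpcT Φ⟩⟩
  intro V _ K x
  exact fpcT_sat Φ K x
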